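/- arXiv:1506.04942 — 4 statements merged into one kernel-verified Lean document; each statement's English description precedes it below -/
import Mathlib

section
/- Let d ≥ 3 be an odd integer and ξ₁,…,ξ_d ∈ (0,1). Then the determinant of the (d-1)×(d-1) matrix T(ξ₁,…,ξ_d), defined by T_{ij} = (1-ξ_i) if j = i, = ξ_{i+1} if j = i+1, for i ≤ d-2, and with last row T_{(d-1)j} = -ξ_d for j ≤ d-2 and T_{(d-1)(d-1)} = 1-ξ_{d-1}-ξ_d, equals ∏_{i=1}^d (1-ξ_i) + ∏_{i=1}^d ξ_i, and in particular is strictly positive. -/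
/-- The `(d-1) × (d-1)` matrix `T(ξ₁,…,ξ_d)` (0-indexed parameters `ξ 0, …, ξ (d-1)`):
row `i` (for `i ≤ d-3`) has `1 - ξ i` on the diagonal, `ξ (i+1)` in column `i+1`, and `0`
elsewhere; the last row (index `d-2`) has `-ξ (d-1)` in columns `0,…,d-3` and
`1 - ξ (d-2) - ξ (d-1)` in the last column. -/
def Tmat (d : ℕ) (ξ : ℕ → ℝ) : Matrix (Fin (d-1)) (Fin (d-1)) ℝ :=
  fun i j =>
    if (i : ℕ) = d - 2 then
      (if (j : ℕ) = d - 2 then 1 - ξ (d-2) - ξ (d-1) else - ξ (d-1))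
    else if (j : ℕ) = (i : ℕ) then 1 - ξ (i : ℕ)
    else if (j : ℕ) = (i : ℕ) + 1 then ξ ((i : ℕ) + 1)
    else 0

/-!
Expand the determinant along the first column. Its only nonzero entries are `1 - ξ 0` on the
diagonal and `-ξ (d-1)` in the last row; the first minor is `T` again for the shifted parameters
`ξ 1, …, ξ (d-1)`, and the last minor is lower triangular with diagonal `ξ 1, …, ξ (d-2)`. This gives
`det T = ∏ (1 - ξ i) + (-1)^(d-1) ∏ ξ i` for every `d ≥ 1`, and the sign is `+1` for odd `d`.
-/

open Finset

namespace Tmat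

variable (n : ℕ) (ξ : ℕ → ℝ)

theorem submatrix_succ_succ :
    (Tmat (n + 3) ξ).submatrix Fin.succ Fin.succ = Tmat (n + 2) (fun k => ξ (k + 1)) := by
  ext i j
  simp only [Matrix.submatrix_apply, Tmat, Fin.val_succ]
  split_ifs <;> first | rfl | omega

theorem isLowerTriangular_submatrix_last_succ :
    ((Tmat (n + 3) ξ).submatrix (Fin.last (n + 1)).succAbove Fin.succ).IsLowerTriangular := by
  intro i j (hij : (i : ℕ) < j)
  simp only [Matrix.submatrix_apply, Fin.succAbove_last, Tmat, Fin.val_succ, Fin.val_castSucc]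
  split_ifs <;> first | rfl | omega

theorem det_submatrix_last_succ :
    ((Tmat (n + 3) ξ).submatrix (Fin.last (n + 1)).succAbove Fin.succ).det =
      ∏ i ∈ range (n + 1), ξ (i + 1) := by
  rw [Matrix.det_of_isLowerTriangular _ (isLowerTriangular_submatrix_last_succ n ξ),
    ← Fin.prod_univ_eq_prod_range]
  refine Fintype.prod_congr _ _ fun i => ?_
  simp only [Matrix.submatrix_apply, Fin.succAbove_last, Tmat, Fin.val_succ, Fin.val_castSucc]
  split_ifs <;> first | rfl | omega

-- The index type `Fin (n + 3 - 1)` has no numerals of its own, hence the ascriptions.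
theorem apply_zero_zero : Tmat (n + 3) ξ (0 : Fin (n + 2)) (0 : Fin (n + 2)) = 1 - ξ 0 := by
  simp [Tmat]

theorem apply_last_zero : Tmat (n + 3) ξ (Fin.last (n + 1)) (0 : Fin (n + 2)) = -ξ (n + 2) := by
  simp [Tmat]

theorem apply_zero_of_ne {i : Fin (n + 2)} (h0 : i ≠ 0) (hlast : i ≠ Fin.last (n + 1)) :
    Tmat (n + 3) ξ i (0 : Fin (n + 2)) = 0 := by
  rw [Fin.ne_iff_vne, Fin.val_zero] at h0
  rw [Fin.ne_iff_vne, Fin.val_last] at hlast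
  simp [Tmat, hlast, Ne.symm h0]

theorem det_eq_laplace_column_zero :
    (Tmat (n + 3) ξ).det = (1 - ξ 0) * (Tmat (n + 2) (fun k => ξ (k + 1))).det +
      (-1) ^ (n + 1) * -ξ (n + 2) * ∏ i ∈ range (n + 1), ξ (i + 1) := by
  rw [Matrix.det_succ_column_zero, Fintype.sum_eq_add 0 (Fin.last (n + 1)) (by simp)
    fun i hi => by rw [apply_zero_of_ne n ξ hi.1 hi.2, mul_zero, zero_mul],
    Fin.succAbove_zero, submatrix_succ_succ, det_submatrix_last_succ, apply_zero_zero,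
    apply_last_zero, Fin.val_zero, Fin.val_last, pow_zero, one_mul]

theorem det_add_two : (Tmat (n + 2) ξ).det =
    ∏ i ∈ range (n + 2), (1 - ξ i) + (-1) ^ (n + 1) * ∏ i ∈ range (n + 2), ξ i := by
  induction n generalizing ξ with
  | zero =>
    rw [show (Tmat 2 ξ).det = 1 - ξ 0 - ξ 1 by simp [Tmat]]
    simp only [prod_range_succ, range_zero, prod_empty]
    ring
  | succ n ih =>
    rw [det_eq_laplace_column_zero, ih, prod_range_succ' _ (n + 2),
      prod_range_succ' (fun i => ξ i) (n + 2), prod_range_succ (fun i => ξ (i + 1)) (n + 1)]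
    ring

theorem det_succ : (Tmat (n + 1) ξ).det =
    ∏ i ∈ range (n + 1), (1 - ξ i) + (-1) ^ n * ∏ i ∈ range (n + 1), ξ i := by
  cases n with
  | zero => simp
  | succ n => exact det_add_two n ξ

end Tmat

theorem det_Tmat_odd_general (d : ℕ) (hodd : Odd d) (ξ : ℕ → ℝ)
    (hξ : ∀ i < d, ξ i ∈ Set.Ioo (0:ℝ) 1) :
    (Tmat d ξ).det = (∏ i ∈ Finset.range d, (1 - ξ i)) + ∏ i ∈ Finset.range d, ξ i ∧
    0 < (Tmat d ξ).det := by
  obtain ⟨k, rfl⟩ := hodd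
  have hdet : (Tmat (2 * k + 1) ξ).det =
      ∏ i ∈ range (2 * k + 1), (1 - ξ i) + ∏ i ∈ range (2 * k + 1), ξ i := by
    rw [Tmat.det_succ, (even_two_mul k).neg_one_pow, one_mul]
  refine ⟨hdet, hdet ▸ add_pos (prod_pos fun i hi => ?_) (prod_pos fun i hi => ?_)⟩
  · exact sub_pos.mpr (hξ i (mem_range.mp hi)).2
  · exact (hξ i (mem_range.mp hi)).1

theorem det_Tmat_odd (d : ℕ) (hd : 3 ≤ d) (hodd : Odd d) (ξ : ℕ → ℝ)
    (hξ : ∀ i < d, ξ i ∈ Set.Ioo (0:ℝ) 1) :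
    (Tmat d ξ).det = (∏ i ∈ Finset.range d, (1 - ξ i)) + ∏ i ∈ Finset.range d, ξ i ∧
    0 < (Tmat d ξ).det :=
  det_Tmat_odd_general d hodd ξ hξ
end

section
/- For any integer d ≥ 3 and any ξ₁,…,ξ_d ∈ [0,1], the determinant of the matrix T(ξ₁,…,ξ_d) equals ∏_{i=1}^d (1-ξ_i) − (−1)^d ∏_{i=1}^d ξ_i, and its absolute value is at most 1. -/
namespace Finset

variable {ι R : Type*}

lemma prod_le_of_mem [CommMonoidWithZero R] [Preorder R] [ZeroLEOneClass R] [PosMulMono R]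
    {s : Finset ι} {f : ι → R} (h0 : ∀ i ∈ s, 0 ≤ f i) (h1 : ∀ i ∈ s, f i ≤ 1) {i : ι}
    (hi : i ∈ s) : ∏ j ∈ s, f j ≤ f i := by
  classical
  rw [← mul_prod_erase s f hi]
  exact mul_le_of_le_one_right (h0 i hi)
    (prod_le_one (fun j hj => h0 j (mem_of_mem_erase hj)) fun j hj => h1 j (mem_of_mem_erase hj))

lemma prod_one_sub_add_prod_le_one [CommRing R] [PartialOrder R] [IsOrderedRing R]
    {s : Finset ι} (hs : s.Nonempty) {x : ι → R} (hx : ∀ i ∈ s, x i ∈ Set.Icc 0 1) :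
    ∏ i ∈ s, (1 - x i) + ∏ i ∈ s, x i ≤ 1 := by
  obtain ⟨i, hi⟩ := hs
  have h₀ : ∀ j ∈ s, 0 ≤ 1 - x j := fun j hj => sub_nonneg.2 (hx j hj).2
  have h₁ : ∀ j ∈ s, 1 - x j ≤ 1 := fun j hj => sub_le_self _ (hx j hj).1
  calc ∏ j ∈ s, (1 - x j) + ∏ j ∈ s, x j ≤ (1 - x i) + x i :=
        add_le_add (prod_le_of_mem h₀ h₁ hi)
          (prod_le_of_mem (fun j hj => (hx j hj).1) (fun j hj => (hx j hj).2) hi)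
    _ = 1 := sub_add_cancel 1 (x i)

end Finset

lemma abs_sub_neg_one_pow_mul_le_add {R : Type*} [Ring R] [LinearOrder R] [IsOrderedRing R]
    {a b : R} (ha : 0 ≤ a) (hb : 0 ≤ b) (d : ℕ) : |a - (-1) ^ d * b| ≤ a + b :=
  calc |a - (-1) ^ d * b| ≤ |a| + |(-1) ^ d * b| := abs_sub _ _
    _ = a + b := by
      rw [abs_mul, abs_pow, abs_neg, abs_one, one_pow, one_mul, abs_of_nonneg ha, abs_of_nonneg hb]

open Finset

lemma Tmat_submatrix_succ_succ (n : ℕ) (ξ : ℕ → ℝ) :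
    (Tmat (n + 3) ξ).submatrix Fin.succ Fin.succ = Tmat (n + 2) (fun k => ξ (k + 1)) := by
  ext a b
  simp only [Matrix.submatrix_apply, Tmat, Fin.val_succ]
  split_ifs <;> first | rfl | omega

lemma det_Tmat_submatrix_castSucc_succ (n : ℕ) (ξ : ℕ → ℝ) :
    ((Tmat (n + 3) ξ).submatrix Fin.castSucc Fin.succ).det =
      ∏ i ∈ range (n + 1), ξ (i + 1) := by
  rw [Matrix.det_of_isLowerTriangular, ← Fin.prod_univ_eq_prod_range]
  · refine prod_congr rfl fun a _ => ?_
    simp [Tmat, a.isLt.ne]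
  · intro a b hab
    have : (a : ℕ) < b := hab
    simp only [Matrix.submatrix_apply, Tmat, Fin.val_castSucc, Fin.val_succ]
    rw [if_neg (by omega), if_neg (by omega), if_neg (by omega)]

lemma Tmat_apply_col_zero (n : ℕ) (ξ : ℕ → ℝ) (i : Fin (n + 2)) :
    Tmat (n + 3) ξ i (0 : Fin (n + 2)) =
      if i = 0 then 1 - ξ 0 else if i = Fin.last _ then -ξ (n + 2) else 0 := by
  simp only [Tmat, Fin.ext_iff, Fin.val_zero, Fin.val_last, show n + 3 - 2 = n + 1 from rfl,
    show n + 3 - 1 = n + 2 from rfl]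
  split_ifs <;> first | rfl | omega | contradiction | congr 2

lemma det_Tmat_succ (n : ℕ) (ξ : ℕ → ℝ) :
    (Tmat (n + 3) ξ).det = (1 - ξ 0) * (Tmat (n + 2) (fun k => ξ (k + 1))).det
      - (-1) ^ (n + 1) * ξ (n + 2) * ∏ i ∈ range (n + 1), ξ (i + 1) := by
  rw [Matrix.det_succ_column_zero, Fin.sum_univ_succ, sum_eq_single (Fin.last n)]
  · rw [Tmat_apply_col_zero, Tmat_apply_col_zero, if_pos rfl, if_neg (Fin.succ_ne_zero _), Fin.succ_last,
      if_pos rfl, Fin.succAbove_zero, Fin.succAbove_last, Tmat_submatrix_succ_succ,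
      det_Tmat_submatrix_castSucc_succ, Fin.val_zero, Fin.val_last, Nat.succ_eq_add_one, pow_zero]
    ring
  · intro i _ hi
    rw [Tmat_apply_col_zero, if_neg (Fin.succ_ne_zero i), if_neg (by simpa [Fin.ext_iff] using hi)]
    ring
  · simp

lemma det_Tmat_eq (n : ℕ) (ξ : ℕ → ℝ) :
    (Tmat (n + 2) ξ).det =
      ∏ i ∈ range (n + 2), (1 - ξ i) - (-1) ^ (n + 2) * ∏ i ∈ range (n + 2), ξ i := by
  induction n generalizing ξ with
  | zero =>
    rw [Matrix.det_fin_one]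
    show 1 - ξ 0 - ξ 1 = _
    simp only [prod_range_succ, prod_range_zero]
    ring
  | succ n ih =>
    rw [det_Tmat_succ, ih, prod_range_succ' _ (n + 2), prod_range_succ' _ (n + 2),
      prod_range_succ (fun i => ξ (i + 1)) (n + 1)]
    ring

theorem det_Tmat (d : ℕ) (hd : 3 ≤ d) (ξ : ℕ → ℝ)
    (hξ : ∀ i < d, ξ i ∈ Set.Icc (0:ℝ) 1) :
    (Tmat d ξ).det =
      (∏ i ∈ Finset.range d, (1 - ξ i)) - (-1 : ℝ) ^ d * ∏ i ∈ Finset.range d, ξ i ∧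
    |(Tmat d ξ).det| ≤ 1 := by
  obtain ⟨n, rfl⟩ : ∃ n, d = n + 2 := ⟨d - 2, by omega⟩
  have hdet := det_Tmat_eq n ξ
  have hξ' : ∀ i ∈ range (n + 2), ξ i ∈ Set.Icc 0 1 := fun i hi => hξ i (mem_range.1 hi)
  refine ⟨hdet, hdet ▸ ?_⟩
  calc _ ≤ ∏ i ∈ range (n + 2), (1 - ξ i) + ∏ i ∈ range (n + 2), ξ i :=
        abs_sub_neg_one_pow_mul_le_add (prod_nonneg fun i hi => sub_nonneg.2 (hξ' i hi).2)
          (prod_nonneg fun i hi => (hξ' i hi).1) _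
    _ ≤ 1 := prod_one_sub_add_prod_le_one nonempty_range_add_one hξ'
end

section
/- For d = 3 and a,b ∈ (0,1) with a ≠ b, the matrix product Q = T(a,b,a)·T(a,b,b)^{-1}·T(b,a,b)·T(b,a,a)^{-1} equals the lower-triangular 2×2 matrix with diagonal entries 1 and lower-left entry t = -(a-b)²/(2ab + b² - a - 2b + 1), where each T(x,y,z) is the 2×2 matrix [[1-x, y],[-z, 1-y-z]]. -/
set_option maxHeartbeats 1000000

/-- For `x,y,z ∈ (0,1)`, `T(x,y,z)` is the 2×2 real matrix with rows
`(1-x, y)` and `(-z, 1-y-z)`. -/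
def T3 (x y z : ℝ) : Matrix (Fin 2) (Fin 2) ℝ :=
  !![1 - x, y; -z, 1 - y - z]

theorem Q_eq_lower_triangular (a b : ℝ) (ha : a ∈ Set.Ioo (0:ℝ) 1)
    (hb : b ∈ Set.Ioo (0:ℝ) 1) (hab : a ≠ b) :
    T3 a b a * (T3 a b b)⁻¹ * T3 b a b * (T3 b a a)⁻¹ =
      !![1, 0; -(a - b)^2 / (2*a*b + b^2 - a - 2*b + 1), 1] := by
  obtain ⟨ha0, ha1⟩ := ha
  obtain ⟨hb0, hb1⟩ := hb
  set d1 : ℝ := a*b*b + (1-a)*(1-b)*(1-b) with hd1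
  set d2 : ℝ := b*a*a + (1-b)*(1-a)*(1-a) with hd2
  have h1 : d1 ≠ 0 := by
    have : 0 < d1 := by
      have := mul_pos (mul_pos ha0 hb0) hb0
      have := mul_pos (mul_pos (sub_pos.2 ha1) (sub_pos.2 hb1)) (sub_pos.2 hb1)
      linarith
    linarith
  have h2 : d2 ≠ 0 := by
    have : 0 < d2 := by
      have := mul_pos (mul_pos hb0 ha0) ha0
      have := mul_pos (mul_pos (sub_pos.2 hb1) (sub_pos.2 ha1)) (sub_pos.2 ha1)
      linarith
    linarith
  have hA : (T3 a b b)⁻¹ = !![(1-b-b)/d1, -b/d1; b/d1, (1-a)/d1] := by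
    refine (Matrix.inv_eq_right_inv ?_)
    ext i j
    fin_cases i <;> fin_cases j <;>
      · simp [T3, Matrix.mul_apply, Fin.sum_univ_two]
        field_simp
        ring
  have hB : (T3 b a a)⁻¹ = !![(1-a-a)/d2, -a/d2; a/d2, (1-b)/d2] := by
    refine (Matrix.inv_eq_right_inv ?_)
    ext i j
    fin_cases i <;> fin_cases j <;>
      · simp [T3, Matrix.mul_apply, Fin.sum_univ_two]
        field_simp
        ring
  rw [hA, hB]
  have hden : 2*a*b + b^2 - a - 2*b + 1 = d1 := by rw [hd1]; ring
  rw [hden]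
  ext i j
  fin_cases i <;> fin_cases j <;>
    · simp [T3, Matrix.mul_apply, Fin.sum_univ_two]
      field_simp
      ring
end

section
/- Let x = (x₁,…,x_{d-1}) and y = (y₁,…,y_{d-1}) be unit vectors in ℝ^{d-1}, let c = ⟨x,y⟩ and δ² = 1 - c². Define the extended vectors x̃ = (x₁,…,x_{d-1}, -Σx_i) and ỹ = (y₁,…,y_{d-1}, -Σy_i) in ℝ^d, and let δ̃² = 1 - ⟨x̃,ỹ⟩²/(‖x̃‖²‖ỹ‖²) be the squared sine of the angle between x̃ and ỹ. Then δ̃² ≤ d·δ². -/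
theorem extended_angular_distance_bound (d : ℕ) (hd : 2 ≤ d)
    (x y : Fin (d-1) → ℝ)
    (hx : ∑ i, (x i)^2 = 1) (hy : ∑ i, (y i)^2 = 1) :
    1 - ((∑ i, x i * y i) + (-∑ i, x i) * (-∑ i, y i))^2 /
        ((1 + (-∑ i, x i)^2) * (1 + (-∑ i, y i)^2))
      ≤ d * (1 - (∑ i, x i * y i)^2) := by
  set S := ∑ i, x i with hS
  set T := ∑ i, y i with hT
  set c := ∑ i, x i * y i with hc
  have hcard : ((Finset.univ : Finset (Fin (d-1))).card : ℝ) = (d : ℝ) - 1 := by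
    simp [Nat.cast_sub (by omega : 1 ≤ d)]
  have hd2 : (2 : ℝ) ≤ (d : ℝ) := by exact_mod_cast hd
  have hc2 : c^2 ≤ 1 := by
    have := Finset.sum_mul_sq_le_sq_mul_sq Finset.univ x y
    rw [hx, hy] at this
    simpa [hc] using this
  have hST : (S - c*T)^2 ≤ ((d:ℝ) - 1) * (1 - c^2) := by
    have h1 := Finset.sum_mul_sq_le_sq_mul_sq Finset.univ
      (fun i => x i - c * y i) (fun _ => (1:ℝ))
    have e1 : ∑ i, (x i - c * y i) * 1 = S - c * T := by
      simp [sub_mul, Finset.sum_sub_distrib, Finset.mul_sum, hS, hT]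
    have e2 : ∑ i, (x i - c * y i)^2 = 1 - c^2 := by
      have : ∀ i, (x i - c * y i)^2
          = (x i)^2 - 2*c*(x i * y i) + c^2 * (y i)^2 := by intro i; ring
      simp_rw [this]
      rw [Finset.sum_add_distrib, Finset.sum_sub_distrib, ← Finset.mul_sum,
        ← Finset.mul_sum, hx, hy, ← hc]
      ring
    have e3 : ∑ _i : Fin (d-1), ((1:ℝ))^2 = (d:ℝ) - 1 := by
      simp [Nat.cast_sub (by omega : 1 ≤ d)]
    rw [e1, e2, e3] at h1
    linarith [h1]
  have hAB : (0:ℝ) < (1 + S^2) * (1 + T^2) := by positivity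
  have hkey : (1 - (d:ℝ) * (1 - c^2)) * ((1 + S^2) * (1 + T^2)) ≤ (c + S*T)^2 := by
    nlinarith [hST, hc2, sq_nonneg S, sq_nonneg T, sq_nonneg (S - c*T),
      mul_nonneg (sub_nonneg.2 hc2) (sq_nonneg T),
      mul_nonneg (sub_nonneg.2 hc2) (sq_nonneg S),
      mul_nonneg (mul_nonneg (sub_nonneg.2 hc2) (sq_nonneg S)) (sq_nonneg T),
      mul_nonneg (sub_nonneg.2 hc2) (mul_nonneg (sq_nonneg S) (sq_nonneg T)),
      mul_nonneg (sub_nonneg.2 hc2) (sub_nonneg.2 (by linarith : (1:ℝ) ≤ (d:ℝ)))]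
  have h2 : 1 - (d:ℝ) * (1 - c^2) ≤ (c + S*T)^2 / ((1 + S^2) * (1 + T^2)) := by
    rw [le_div_iff₀ hAB]; exact hkey
  have hrw : (c + (-S) * (-T))^2 / ((1 + (-S)^2) * (1 + (-T)^2))
      = (c + S*T)^2 / ((1 + S^2) * (1 + T^2)) := by ring_nf
  rw [hrw]
  linarith
end
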